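/- Let {g_i} be a general pre-F-frame for X_F with respect to Θ_F, where Θ_s are CB-spaces. The following are equivalent: (i) there exists a continuous operator V : Θ_F → X_F with V{g_i(f)} = f for all f ∈ X_F; (ii) there exists {f_i} ⊂ X_F such that Σ c_i f_i converges in X_F for every {c_i} ∈ Θ_F and f = Σ g_i(f) f_i for every f ∈ X_F. -/

import Mathlib

/-!
(i) ⇒ (ii): take `f_i = V e_i`. Then `V c - ∑_{i<n} c_i f_i = V (c - trunc n c)`, which tends to
zero in every `‖·‖_k` because `V` is continuous and the `Θ_s` have the CB property.

(ii) ⇒ (i): the limits `∑ c_i f_i` define a linear map on `Θ_F` (extended arbitrarily to all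
sequences) which reconstructs every `f`, by uniqueness of limits. Its continuity is
Banach–Steinhaus: `Θ_F` is Fréchet, hence Baire, hence barrelled; the partial sum operators are
continuous by the BK property and pointwise bounded because they converge, so `sup_N ‖V_N ·‖_k`
is a continuous seminorm on `Θ_F`, dominated by a single `‖·‖_p` since these increase.
-/

open Filter Finset

/-- The `i`-th canonical sequence vector. -/
def e (i : ℕ) : ℕ → ℝ := fun j => if j = i then 1 else 0

/-- Truncation of a sequence to its first `n` coordinates. -/
def trunc (n : ℕ) (c : ℕ → ℝ) : ℕ → ℝ := fun j => if j < n then c j else 0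

/-- `N` is a norm on the real vector space `V`. -/
def IsNormOn {V : Type*} [AddCommGroup V] [Module ℝ V] (N : V → ℝ) : Prop :=
  (∀ x, 0 ≤ N x) ∧ (∀ x y, N (x + y) ≤ N x + N y) ∧
  (∀ (a : ℝ) (x : V), N (a • x) = |a| * N x) ∧ ∀ x, N x = 0 → x = 0

open Topology

section Seminorms

variable {V : Type*} [AddCommGroup V] [Module ℝ V]

def IsNormOn.toSeminorm {N : V → ℝ} (h : IsNormOn N) : Seminorm ℝ V :=
  Seminorm.of N h.2.1 fun a x => by rw [h.2.2.1, Real.norm_eq_abs]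

@[simp]
theorem IsNormOn.coe_toSeminorm {N : V → ℝ} (h : IsNormOn N) : ⇑h.toSeminorm = N := rfl

theorem eq_of_tendsto_sub_of_tendsto_sub {ι : Type*} {q : ι → Seminorm ℝ V}
    (hq : ∀ x, (∀ t, q t x = 0) → x = 0) {s : ℕ → V} {x y : V}
    (hx : ∀ t, Tendsto (fun n => q t (x - s n)) atTop (𝓝 0))
    (hy : ∀ t, Tendsto (fun n => q t (y - s n)) atTop (𝓝 0)) : x = y := by
  refine sub_eq_zero.mp (hq _ fun t => le_antisymm ?_ (apply_nonneg _ _))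
  simpa using ge_of_tendsto' ((hx t).add (hy t)) fun n => by
    simpa using map_sub_le_add (q t) (x - s n) (y - s n)

theorem exists_linearMap_tendsto {E ι : Type*} [AddCommGroup E] [Module ℝ E]
    {q : ι → Seminorm ℝ V} (hq : ∀ x, (∀ t, q t x = 0) → x = 0)
    (S : ℕ → E →ₗ[ℝ] V) (D : Submodule ℝ E)
    (hD : ∀ c ∈ D, ∃ x, ∀ t, Tendsto (fun n => q t (x - S n c)) atTop (𝓝 0)) :
    ∃ L : E →ₗ[ℝ] V, ∀ c ∈ D, ∀ t, Tendsto (fun n => q t (L c - S n c)) atTop (𝓝 0) := by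
  choose L₀ hL₀ using hD
  let L₁ : D →ₗ[ℝ] V :=
    { toFun := fun c => L₀ c c.2
      map_add' := fun c d => by
        refine eq_of_tendsto_sub_of_tendsto_sub hq (hL₀ _ (c + d).2) fun t => ?_
        refine squeeze_zero (fun n => apply_nonneg _ _) (fun n => ?_)
          (by simpa using (hL₀ c c.2 t).add (hL₀ d d.2 t))
        simpa only [Submodule.coe_add, map_add, add_sub_add_comm] using map_add_le_add _ _ _
      map_smul' := fun a c => by
        refine eq_of_tendsto_sub_of_tendsto_sub hq (hL₀ _ (a • c).2) fun t => ?_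
        simpa [← smul_sub, map_smul_eq_mul] using (hL₀ c c.2 t).const_mul ‖a‖ }
  obtain ⟨L, hL⟩ := L₁.exists_extend
  refine ⟨L, fun c hc => ?_⟩
  rw [show L c = L₀ c hc from LinearMap.congr_fun hL ⟨c, hc⟩]
  exact hL₀ c hc

end Seminorms

section Synthesis

variable {X : Type*} [AddCommGroup X] [Module ℝ X]

def synthesis (f : ℕ → X) (n : ℕ) : (ℕ → ℝ) →ₗ[ℝ] X :=
  ∑ i ∈ range n, (LinearMap.proj i).smulRight (f i)

@[simp]
theorem synthesis_apply (f : ℕ → X) (n : ℕ) (c : ℕ → ℝ) :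
    synthesis f n c = ∑ i ∈ range n, c i • f i := by
  simp [synthesis]

theorem trunc_eq_sum (n : ℕ) (c : ℕ → ℝ) : trunc n c = ∑ i ∈ range n, c i • e i := by
  funext j
  simp [trunc, e, Finset.sum_apply]

theorem tendsto_sub_synthesis_of_le {P : Submodule ℝ (ℕ → ℝ)} (he : ∀ i, e i ∈ P)
    {r : Seminorm ℝ (ℕ → ℝ)} {q : Seminorm ℝ X} {V : (ℕ → ℝ) →ₗ[ℝ] X} {C : ℝ}
    (hV : ∀ c ∈ P, q (V c) ≤ C * r c) {c : ℕ → ℝ} (hc : c ∈ P)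
    (hcr : Tendsto (fun n => r (c - trunc n c)) atTop (𝓝 0)) :
    Tendsto (fun n => q (V c - synthesis (fun i => V (e i)) n c)) atTop (𝓝 0) := by
  have hrem : ∀ n, V c - synthesis (fun i => V (e i)) n c = V (c - trunc n c) := fun n => by
    simp [trunc_eq_sum, map_sum]
  have hmem : ∀ n, c - trunc n c ∈ P := fun n =>
    P.sub_mem hc (trunc_eq_sum n c ▸ P.sum_mem fun i _ => P.smul_mem _ (he i))
  refine squeeze_zero (fun n => apply_nonneg _ _) (fun n => ?_) (by simpa using hcr.const_mul C)
  rw [hrem]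
  exact hV _ (hmem n)

theorem continuous_seminorm_sum_smul {E : Type*} [AddCommGroup E] [Module ℝ E]
    [TopologicalSpace E] [IsTopologicalAddGroup E] {r : Seminorm ℝ E} (hr : Continuous r)
    (φ : ℕ → E →ₗ[ℝ] ℝ) (hφ : ∀ i, ∃ K, ∀ x, |φ i x| ≤ K * r x) (q : Seminorm ℝ X)
    (f : ℕ → X) (n : ℕ) :
    Continuous fun x => q (∑ i ∈ range n, φ i x • f i) := by
  choose K hK using hφ
  let M : NNReal := ⟨∑ i ∈ range n, |K i| * q (f i), sum_nonneg fun i _ => by positivity⟩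
  let S : E →ₗ[ℝ] X := ∑ i ∈ range n, (φ i).smulRight (f i)
  have hle : q.comp S ≤ M • r := fun x => by
    calc q (S x) ≤ ∑ i ∈ range n, q (φ i x • f i) := by
          simpa [S] using Finset.le_sum_of_subadditive q (map_zero q).le (map_add_le_add q)
            (range n) fun i => φ i x • f i
    _ ≤ ∑ i ∈ range n, |K i| * q (f i) * r x := sum_le_sum fun i _ => by
          rw [map_smul_eq_mul, Real.norm_eq_abs, mul_right_comm]
          exact mul_le_mul_of_nonneg_right ((hK i x).trans
            (mul_le_mul_of_nonneg_right (le_abs_self _) (apply_nonneg _ _))) (apply_nonneg _ _)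
    _ = (M • r) x := by rw [smul_apply, NNReal.smul_def, smul_eq_mul, ← sum_mul]; rfl
  have hMr : Continuous ⇑(M • r) := by
    simpa [NNReal.smul_def] using hr.const_smul (M : ℝ)
  exact (Seminorm.continuous_of_le hMr hle).congr fun x => by simp [S]

end Synthesis

section BanachSteinhaus

theorem WithSeminorms.barrelledSpace {E : Type*} [AddCommGroup E] [Module ℝ E]
    [TopologicalSpace E] {p : SeminormFamily ℝ E ℕ} (hp : WithSeminorms p)
    (hcomplete : ∀ u : ℕ → E, (∀ i, ∀ ε > 0, ∃ N, ∀ m ≥ N, ∀ n ≥ N, p i (u m - u n) < ε) →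
      ∃ c, ∀ i, Tendsto (fun n => p i (u n - c)) atTop (𝓝 0)) :
    BarrelledSpace ℝ E := by
  have := hp.topologicalAddGroup
  have := hp.continuousSMul
  let _ : UniformSpace E := IsTopologicalAddGroup.rightUniformSpace E
  have : IsUniformAddGroup E := isUniformAddGroup_of_addCommGroup
  have := hp.firstCountableTopology
  have : (uniformity E).IsCountablyGenerated := IsUniformAddGroup.uniformity_countably_generated
  have : CompleteSpace E := by
    refine UniformSpace.complete_of_cauchySeq_tendsto fun u hu => ?_
    rw [CauchySeq, IsUniformAddGroup.cauchy_map_iff_tendsto, hp.tendsto_nhds,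
      prod_atTop_atTop_eq] at hu
    obtain ⟨c, hc⟩ := hcomplete u fun i ε hε => by
      simpa using eventually_atTop_prod_self'.mp (hu.2 i ε hε)
    exact ⟨c, (hp.tendsto_nhds_atTop u c).mpr fun i ε hε => by
      simpa using (hc i).eventually_lt_const hε⟩
  -- complete and metrizable, hence Baire (`BaireSpace.of_completelyPseudoMetrizable`),
  -- hence barrelled (`BaireSpace.instBarrelledSpace`)
  infer_instance

/-- A type synonym, so that `E` carries the topology of `p` rather than one it may already have
(a submodule of `ℕ → ℝ` would get the product topology). -/
def WithSeminormTopology {E ι : Type*} [AddCommGroup E] [Module ℝ E]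
    (_p : SeminormFamily ℝ E ι) : Type _ := E

namespace WithSeminormTopology

variable {E ι : Type*} [AddCommGroup E] [Module ℝ E] (p : SeminormFamily ℝ E ι)

instance : AddCommGroup (WithSeminormTopology p) := inferInstanceAs (AddCommGroup E)

noncomputable instance : Module ℝ (WithSeminormTopology p) := inferInstanceAs (Module ℝ E)

noncomputable instance : TopologicalSpace (WithSeminormTopology p) :=
  p.moduleFilterBasis.topology

theorem withSeminorms :
    WithSeminorms (ι := ι) (E := WithSeminormTopology p) (𝕜 := ℝ) (fun i => p i) := ⟨rfl⟩

end WithSeminormTopology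

variable {X : Type*} [AddCommGroup X] [Module ℝ X]

theorem exists_bound_of_tendsto {E : Type*} [AddCommGroup E] [Module ℝ E] [TopologicalSpace E]
    [BarrelledSpace ℝ E] {p : SeminormFamily ℝ E ℕ} (hp : WithSeminorms p) (hmono : Monotone p)
    (q : Seminorm ℝ X) (S : ℕ → E →ₗ[ℝ] X) (hS : ∀ n, Continuous fun x => q (S n x))
    (L : E → X) (hL : ∀ x, Tendsto (fun n => q (L x - S n x)) atTop (𝓝 0)) :
    ∃ m, ∃ C > 0, ∀ x, q (L x) ≤ C * p m x := by
  have hbdd : ∀ x, BddAbove (Set.range fun n => q (S n x)) := fun x => by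
    obtain ⟨b, hb⟩ := (hL x).bddAbove_range
    refine ⟨q (L x) + b, Set.forall_mem_range.mpr fun n => ?_⟩
    exact (le_map_add_map_sub' q _ _).trans (add_le_add_right (hb ⟨n, rfl⟩) _)
  have hB : BddAbove (Set.range fun n => q.comp (S n)) := Seminorm.bddAbove_range_iff.mpr hbdd
  have hcont : Continuous ⇑(⨆ n, q.comp (S n)) := by
    rw [Seminorm.coe_iSup_eq hB]
    exact Seminorm.continuous_iSup _ hS hB
  obtain ⟨s, C, hC, hle⟩ := Seminorm.bound_of_continuous hp _ hcont
  refine ⟨s.sup id, C, by positivity, fun x => ?_⟩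
  have hsup : ∀ n, q (S n x) ≤ C * p (s.sup id) x := fun n => by
    calc q (S n x) ≤ (⨆ n, q.comp (S n)) x := by
          rw [Seminorm.iSup_apply hB]; exact le_ciSup (hbdd x) n
    _ ≤ (C • s.sup p) x := hle x
    _ ≤ C * p (s.sup id) x := by
          refine mul_le_mul_of_nonneg_left (Seminorm.finset_sup_apply_le (apply_nonneg _ x)
            fun i hi => hmono (le_sup (f := id) hi) x) C.2
  simpa using ge_of_tendsto' (tendsto_const_nhds.add (hL x)) fun n =>
    (le_map_add_map_sub q (L x) (S n x)).trans (add_le_add_left (hsup n) _)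

theorem exists_bound_of_tendsto_synthesis (P : Submodule ℝ (ℕ → ℝ))
    {r : ℕ → Seminorm ℝ (ℕ → ℝ)} (hr : Monotone r)
    (hcomplete : ∀ u : ℕ → ℕ → ℝ, (∀ n, u n ∈ P) →
      (∀ t, ∀ ε > 0, ∃ N, ∀ m ≥ N, ∀ n ≥ N, r t (u m - u n) < ε) →
      ∃ c ∈ P, ∀ t, Tendsto (fun n => r t (u n - c)) atTop (𝓝 0))
    (hBK : ∀ i, ∃ K, ∀ c ∈ P, |c i| ≤ K * r 0 c)
    (q : Seminorm ℝ X) (f : ℕ → X) (L : (ℕ → ℝ) → X)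
    (hL : ∀ c ∈ P, Tendsto (fun n => q (L c - synthesis f n c)) atTop (𝓝 0)) :
    ∃ m, ∃ C > 0, ∀ c ∈ P, q (L c) ≤ C * r m c := by
  let p : SeminormFamily ℝ P ℕ := fun t => (r t).comp P.subtype
  have hp := WithSeminormTopology.withSeminorms p
  have := hp.topologicalAddGroup
  have : BarrelledSpace ℝ (WithSeminormTopology p) := hp.barrelledSpace fun u hu => by
    obtain ⟨c, hc, hlim⟩ := hcomplete (fun n => Subtype.val (u n)) (fun n => (u n).2) hu
    exact ⟨(⟨c, hc⟩ : P), hlim⟩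
  have hcoord (i : ℕ) : ∃ K, ∀ c : WithSeminormTopology p, |Subtype.val c i| ≤ K * p 0 c := by
    obtain ⟨K, hK⟩ := hBK i
    exact ⟨K, fun c => hK _ (Subtype.property c)⟩
  have hS (n : ℕ) :
      Continuous fun c : WithSeminormTopology p => q (synthesis f n (Subtype.val c)) := by
    refine (continuous_seminorm_sum_smul (hp.continuous_seminorm 0)
      (fun i => (LinearMap.proj i).comp P.subtype) hcoord q f n).congr fun c => ?_
    rw [synthesis_apply]
    rfl
  obtain ⟨m, C, hC, hb⟩ := exists_bound_of_tendsto hp (fun a b h c => hr h (Subtype.val c)) q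
    (fun n => (synthesis f n).comp P.subtype) hS
    (fun c => L (Subtype.val c)) (fun c => hL _ (Subtype.property c))
  exact ⟨m, C, hC, fun c hc => hb (⟨c, hc⟩ : P)⟩

end BanachSteinhaus

theorem statement12_general
    {X : Type*} [AddCommGroup X] [Module ℝ X]
    -- `X_F` with its increasing family of norms `‖·‖_s`
    (nX : ℕ → X → ℝ) (hnX : ∀ t, IsNormOn (nX t))
    -- the Fréchet sequence space `Θ_F = ⋂ Θ_s`, each `Θ_s` a BK-space
    (memT : ℕ → (ℕ → ℝ) → Prop) (nT : ℕ → (ℕ → ℝ) → ℝ)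
    (hnT : ∀ t, IsNormOn (nT t))
    (hTmono : ∀ t c, nT t c ≤ nT (t + 1) c)
    (hT0 : ∀ t, memT t 0) (hTadd : ∀ t c d, memT t c → memT t d → memT t (c + d))
    (hTsmul : ∀ t (a : ℝ) c, memT t c → memT t (a • c))
    (hBK : ∀ t i, ∃ K, ∀ c, memT t c → |c i| ≤ K * nT t c)
    -- `{g_i}` is a general pre-F-frame for `X_F` w.r.t. `Θ_F`
    (g : ℕ → X →ₗ[ℝ] ℝ) (s st : ℕ → ℕ)
    (A B : ℕ → ℝ)
    (hframe : ∀ f : X, (∀ t, memT t (fun i => g i f)) ∧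
      ∀ k, A k * nX (s k) f ≤ nT k (fun i => g i f) ∧
        nT k (fun i => g i f) ≤ B k * nX (st k) f)
    -- `Θ_F` is a Fréchet space (complete) and the `Θ_s` are CB-spaces
    (hTFcomplete : ∀ u : ℕ → (ℕ → ℝ), (∀ n t, memT t (u n)) →
      (∀ t, ∀ ε > 0, ∃ N, ∀ m ≥ N, ∀ n ≥ N, nT t (u m - u n) < ε) →
      ∃ c, (∀ t, memT t c) ∧ ∀ t, Tendsto (fun n => nT t (u n - c)) atTop (nhds 0))
    (hTe : ∀ t i, memT t (e i))
    (hCB : ∀ t c, memT t c → Tendsto (fun n => nT t (c - trunc n c)) atTop (nhds 0)) :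
    -- (i) a continuous operator `V : Θ_F → X_F` with `V{g_i(f)} = f`
    (∃ V : (ℕ → ℝ) →ₗ[ℝ] X,
       (∀ f : X, V (fun i => g i f) = f) ∧
       (∀ k, ∃ p, ∃ C > 0, ∀ c, (∀ t, memT t c) → nX k (V c) ≤ C * nT p c))
    ↔
    -- (ii) a sequence `{f_i}` with convergent synthesis series and reconstruction
    (∃ fseq : ℕ → X,
       (∀ c, (∀ t, memT t c) → ∃ x : X, ∀ t, Tendsto
         (fun n => nX t (x - ∑ i ∈ Finset.range n, c i • fseq i)) atTop (nhds 0)) ∧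
       (∀ f : X, ∀ t, Tendsto
         (fun n => nX t (f - ∑ i ∈ Finset.range n, g i f • fseq i)) atTop (nhds 0))) := by
  let P : Submodule ℝ (ℕ → ℝ) :=
    { carrier := {c | ∀ t, memT t c}
      add_mem' := fun hc hd t => hTadd t _ _ (hc t) (hd t)
      zero_mem' := hT0
      smul_mem' := fun a _ hc t => hTsmul t a _ (hc t) }
  have hsep : ∀ x, (∀ t, (hnX t).toSeminorm x = 0) → x = 0 := fun x hx => (hnX 0).2.2.2 x (hx 0)
  constructor
  · rintro ⟨V, hVrec, hVb⟩
    have hV : ∀ c ∈ P, ∀ t,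
        Tendsto (fun n => nX t (V c - synthesis (fun i => V (e i)) n c)) atTop (𝓝 0) := by
      intro c hc t
      obtain ⟨m, C, -, hC⟩ := hVb t
      exact tendsto_sub_synthesis_of_le (P := P) (r := (hnT m).toSeminorm)
        (q := (hnX t).toSeminorm) (fun i t => hTe t i) hC hc (hCB m c (hc m))
    refine ⟨fun i => V (e i), fun c hc => ⟨V c, by simpa using hV c hc⟩, fun f t => ?_⟩
    simpa [hVrec] using hV _ (hframe f).1 t
  · rintro ⟨f, hconv, hrecon⟩
    obtain ⟨V, hV⟩ := exists_linearMap_tendsto hsep (synthesis f) P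
      fun c hc => by simpa using hconv c hc
    refine ⟨V, fun x => eq_of_tendsto_sub_of_tendsto_sub hsep (hV _ (hframe x).1)
      (by simpa using hrecon x), fun k => ?_⟩
    exact exists_bound_of_tendsto_synthesis P (r := fun t => (hnT t).toSeminorm)
      (monotone_nat_of_le_succ fun t c => hTmono t c) hTFcomplete
      (fun i => (hBK 0 i).imp fun K hK c hc => hK c (hc 0))
      (hnX k).toSeminorm f V fun c hc => hV c hc k

/-- (Theorem equivcompl, (i) ⇔ (ii).) For a general pre-F-frame with the
`Θ_s` CB-spaces: there is a continuous `V : Θ_F → X_F` with `V{g_i(f)} = f` iff there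
is `{f_i} ⊂ X_F` such that `Σ c_i f_i` converges in `X_F` for every `{c_i} ∈ Θ_F` and
`f = Σ g_i(f) f_i` for every `f ∈ X_F`. -/
theorem statement12
    {X : Type*} [AddCommGroup X] [Module ℝ X]
    -- `X_F` with its increasing family of norms `‖·‖_s`
    (nX : ℕ → X → ℝ) (hnX : ∀ t, IsNormOn (nX t))
    (hXmono : ∀ t f, nX t f ≤ nX (t + 1) f)
    -- the Fréchet sequence space `Θ_F = ⋂ Θ_s`, each `Θ_s` a BK-space
    (memT : ℕ → (ℕ → ℝ) → Prop) (nT : ℕ → (ℕ → ℝ) → ℝ)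
    (hnT : ∀ t, IsNormOn (nT t))
    (hTmono : ∀ t c, nT t c ≤ nT (t + 1) c)
    (hTnest : ∀ t c, memT (t + 1) c → memT t c)
    (hT0 : ∀ t, memT t 0) (hTadd : ∀ t c d, memT t c → memT t d → memT t (c + d))
    (hTsmul : ∀ t (a : ℝ) c, memT t c → memT t (a • c))
    (hBK : ∀ t i, ∃ K, ∀ c, memT t c → |c i| ≤ K * nT t c)
    -- `{g_i}` is a general pre-F-frame for `X_F` w.r.t. `Θ_F`
    (g : ℕ → X →ₗ[ℝ] ℝ) (s st : ℕ → ℕ)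
    (hs : Monotone s) (hstend : Tendsto s atTop atTop)
    (hst : Monotone st) (hsttend : Tendsto st atTop atTop)
    (hsle : ∀ k, s k ≤ st k)
    (A B : ℕ → ℝ) (hA : ∀ k, 0 < A k) (hB : ∀ k, 0 < B k)
    (hframe : ∀ f : X, (∀ t, memT t (fun i => g i f)) ∧
      ∀ k, A k * nX (s k) f ≤ nT k (fun i => g i f) ∧
        nT k (fun i => g i f) ≤ B k * nX (st k) f)
    -- `Θ_F` is a Fréchet space (complete) and the `Θ_s` are CB-spaces
    (hTFcomplete : ∀ u : ℕ → (ℕ → ℝ), (∀ n t, memT t (u n)) →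
      (∀ t, ∀ ε > 0, ∃ N, ∀ m ≥ N, ∀ n ≥ N, nT t (u m - u n) < ε) →
      ∃ c, (∀ t, memT t c) ∧ ∀ t, Tendsto (fun n => nT t (u n - c)) atTop (nhds 0))
    (hTe : ∀ t i, memT t (e i))
    (hCB : ∀ t c, memT t c → Tendsto (fun n => nT t (c - trunc n c)) atTop (nhds 0)) :
    -- (i) a continuous operator `V : Θ_F → X_F` with `V{g_i(f)} = f`
    (∃ V : (ℕ → ℝ) →ₗ[ℝ] X,
       (∀ f : X, V (fun i => g i f) = f) ∧
       (∀ k, ∃ p, ∃ C > 0, ∀ c, (∀ t, memT t c) → nX k (V c) ≤ C * nT p c))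
    ↔
    -- (ii) a sequence `{f_i}` with convergent synthesis series and reconstruction
    (∃ fseq : ℕ → X,
       (∀ c, (∀ t, memT t c) → ∃ x : X, ∀ t, Tendsto
         (fun n => nX t (x - ∑ i ∈ Finset.range n, c i • fseq i)) atTop (nhds 0)) ∧
       (∀ f : X, ∀ t, Tendsto
         (fun n => nX t (f - ∑ i ∈ Finset.range n, g i f • fseq i)) atTop (nhds 0))) :=
  statement12_general nX hnX memT nT hnT hTmono hT0 hTadd hTsmul hBK g s st A B hframe hTFcomplete
    hTe hCB
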